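/- arXiv:1811.02416 — 3 statements merged into one kernel-verified Lean document; each statement's English description precedes it below -/
import Mathlib

section
/- The map (x,y) ↦ x + y is injective on the set of real points of the curve y² = x³ + x − 1. -/
/-- The map `(x,y) ↦ x + y` is injective on the real points of `y² = x³ + x − 1`. -/
theorem sum_injective_on_real_points (x₁ y₁ x₂ y₂ : ℝ)
    (h₁ : y₁ ^ 2 = x₁ ^ 3 + x₁ - 1) (h₂ : y₂ ^ 2 = x₂ ^ 3 + x₂ - 1)
    (hsum : x₁ + y₁ = x₂ + y₂) : x₁ = x₂ ∧ y₁ = y₂ := by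
  have hx₁ : 0 < x₁ := by nlinarith [sq_nonneg y₁, sq_nonneg x₁, sq_nonneg (x₁ - 1), sq_nonneg (x₁ + 1)]
  have hx₂ : 0 < x₂ := by nlinarith [sq_nonneg y₂, sq_nonneg x₂, sq_nonneg (x₂ - 1), sq_nonneg (x₂ + 1)]
  have key : (x₁ - x₂) * (y₁ + y₂ + x₁^2 + x₁*x₂ + x₂^2 + 1) = 0 := by
    have hy : y₁ - y₂ = -(x₁ - x₂) := by linarith
    linear_combination (y₁ + y₂) * hy - h₁ + h₂
  rcases mul_eq_zero.mp key with h | h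
  · have hx : x₁ = x₂ := by linarith
    exact ⟨hx, by linarith⟩
  · exfalso
    nlinarith [sq_nonneg (y₁ + y₂), sq_nonneg (y₁ - y₂), sq_nonneg (x₁ - x₂), sq_nonneg (x₁ + x₂), mul_pos hx₁ hx₂, sq_nonneg (x₁*x₂ - 1), sq_nonneg (x₁ - 1), sq_nonneg (x₂ - 1)]
end

section
/- The map (x,y) ↦ x + y is injective on the set of rational points of the curve y² = x³ + x − 1. -/
lemma aux_pos (a b : ℚ) : (a^2+a*b+b^2+1)^2 + (a-b)^2 - 2*(a^3+b^3+a+b-2) > 0 := by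
  nlinarith [sq_nonneg (a^2+a*b+b^2 - a - b), sq_nonneg (a-1), sq_nonneg (b-1),
    sq_nonneg (a+b-1), sq_nonneg (a-b), sq_nonneg (a*b-1), sq_nonneg (a+b),
    sq_nonneg (a*b), sq_nonneg (a^2+a*b+b^2-1)]

/-- The map `(x,y) ↦ x + y` is injective on the rational points of `y² = x³ + x − 1`. -/
theorem sum_injective_on_rational_points (x₁ y₁ x₂ y₂ : ℚ)
    (h₁ : y₁ ^ 2 = x₁ ^ 3 + x₁ - 1) (h₂ : y₂ ^ 2 = x₂ ^ 3 + x₂ - 1)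
    (hsum : x₁ + y₁ = x₂ + y₂) : x₁ = x₂ ∧ y₁ = y₂ := by
  by_cases hx : x₁ = x₂
  · exact ⟨hx, by linarith⟩
  · exfalso
    have hd : x₂ - x₁ ≠ 0 := fun h => hx (by linarith)
    have hD : y₁ - y₂ = x₂ - x₁ := by linarith
    have hkey : (x₂ - x₁) * (y₁ + y₂ + (x₁^2 + x₁*x₂ + x₂^2 + 1)) = 0 := by
      linear_combination h₁ - h₂ - (y₁ + y₂) * hD
    have hQ : y₁ + y₂ = -(x₁^2 + x₁*x₂ + x₂^2 + 1) := by
      rcases mul_eq_zero.mp hkey with h | h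
      · exact absurd h hd
      · linarith
    have hfinal : (x₁^2+x₁*x₂+x₂^2+1)^2 + (x₁-x₂)^2
        = 2*(x₁^3+x₂^3+x₁+x₂-2) := by
      linear_combination 2*h₁ + 2*h₂ + ((x₁^2+x₁*x₂+x₂^2+1) - y₁ - y₂) * hQ
        - (y₁ - y₂ + x₂ - x₁) * hD
    linarith [aux_pos x₁ x₂]
end

section
/- The point (1,1) lies on the curve y² = x³ + x − 1, and the rational points of this curve are Zariski dense in it. -/
/-!
On `y² = x³ + a x + b`, doubling sends `x` to `(x⁴ - 2a x² - 8b x + a²) / (4 (x³ + a x + b))`.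
If `a, b` are `2`-adic integers and `|x|₂ > 1`, the leading terms dominate numerator and
denominator, so `|x|₂` is multiplied by `|4|₂⁻¹ = 4`. Starting from `4 • (1, 1) = (25/36, 37/216)`,
where `|x|₂ = 4`, repeated doubling gives rational points with unbounded `|x|₂`.
-/

open WeierstrassCurve IsAbsoluteValue

def shortWeierstrass {R : Type*} [CommRing R] (a b : R) : Affine R :=
  (WeierstrassCurve.mk 0 0 0 a b).toAffine

lemma shortWeierstrass_equation_iff {R : Type*} [CommRing R] {a b x y : R} :
    (shortWeierstrass a b).Equation x y ↔ y ^ 2 = x ^ 3 + a * x + b := by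
  simp [shortWeierstrass, Affine.equation_iff]

lemma shortWeierstrass_addX_slope_self {F : Type*} [Field F] [DecidableEq F] {a b x y : F}
    (h : (shortWeierstrass a b).Equation x y) (hy : 2 * y ≠ 0) :
    (shortWeierstrass a b).addX x x ((shortWeierstrass a b).slope x x y y) =
      (x ^ 4 - 2 * a * x ^ 2 - 8 * b * x + a ^ 2) / (4 * (x ^ 3 + a * x + b)) := by
  rw [shortWeierstrass_equation_iff] at h
  have hy' : y ≠ (shortWeierstrass a b).negY x y := by
    simp only [shortWeierstrass, Affine.negY]
    intro h'
    exact hy (by linear_combination h')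
  rw [Affine.slope_of_Y_ne rfl hy', ← h]
  simp only [shortWeierstrass, Affine.addX, Affine.negY]
  have hy0 : y ≠ 0 := right_ne_zero_of_mul hy
  have h2 : (2 : F) ≠ 0 := left_ne_zero_of_mul hy
  have h4 : (4 : F) ≠ 0 := by
    rw [show (4 : F) = 2 * 2 by norm_num]
    exact mul_ne_zero h2 h2
  rw [show y - (-y - 0 * x - 0) = 2 * y by ring]
  field_simp
  linear_combination (-32 * x) * h

lemma padicNorm_add_eq_left_of_lt {p : ℕ} [Fact p.Prime] {q r : ℚ}
    (h : padicNorm p r < padicNorm p q) : padicNorm p (q + r) = padicNorm p q := by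
  rw [padicNorm.add_eq_max_of_ne h.ne', max_eq_left h.le]

lemma padicNorm_add_lt {p : ℕ} [Fact p.Prime] {q r c : ℚ}
    (hq : padicNorm p q < c) (hr : padicNorm p r < c) : padicNorm p (q + r) < c :=
  padicNorm.nonarchimedean.trans_lt (max_lt hq hr)

lemma padicNorm_two_two : padicNorm 2 2 = 2⁻¹ := by
  exact_mod_cast padicNorm.padicNorm_p_of_prime (p := 2)

lemma padicNorm_mul_le_of_le_one {p : ℕ} [Fact p.Prime] {a : ℚ} (ha : padicNorm p a ≤ 1)
    (q : ℚ) : padicNorm p (a * q) ≤ padicNorm p q := by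
  rw [padicNorm.mul]
  exact mul_le_of_le_one_left (padicNorm.nonneg q) ha

lemma padicNorm_cubic_of_one_lt {p : ℕ} [Fact p.Prime] {a b x : ℚ} (ha : padicNorm p a ≤ 1)
    (hb : padicNorm p b ≤ 1) (hx : 1 < padicNorm p x) :
    padicNorm p (x ^ 3 + a * x + b) = padicNorm p x ^ 3 := by
  have hx3 : padicNorm p (x ^ 3) = padicNorm p x ^ 3 := abv_pow _ x 3
  have h_lower : padicNorm p (a * x + b) < padicNorm p (x ^ 3) :=
    hx3 ▸ padicNorm_add_lt
      ((padicNorm_mul_le_of_le_one ha x).trans_lt (lt_self_pow₀ hx (by norm_num)))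
      (hb.trans_lt (one_lt_pow₀ hx (by norm_num)))
  rw [add_assoc, padicNorm_add_eq_left_of_lt h_lower, hx3]

lemma padicNorm_duplication_numerator_of_one_lt {p : ℕ} [Fact p.Prime] {a b x : ℚ}
    (ha : padicNorm p a ≤ 1) (hb : padicNorm p b ≤ 1) (hx : 1 < padicNorm p x) :
    padicNorm p (x ^ 4 - 2 * a * x ^ 2 - 8 * b * x + a ^ 2) = padicNorm p x ^ 4 := by
  have hx4 : padicNorm p (x ^ 4) = padicNorm p x ^ 4 := abv_pow _ x 4
  have h2 : padicNorm p (-2 * a) ≤ 1 := by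
    refine (padicNorm_mul_le_of_le_one ?_ a).trans ha
    exact_mod_cast padicNorm.of_int (p := p) (-2)
  have h8 : padicNorm p (-8 * b) ≤ 1 := by
    refine (padicNorm_mul_le_of_le_one ?_ b).trans hb
    exact_mod_cast padicNorm.of_int (p := p) (-8)
  have ha2 : padicNorm p (a ^ 2) ≤ 1 := by
    rw [sq]; exact (padicNorm_mul_le_of_le_one ha a).trans ha
  have h_lower : padicNorm p (-2 * a * x ^ 2 + (-8 * b * x + a ^ 2)) < padicNorm p (x ^ 4) :=
    hx4 ▸ padicNorm_add_lt ((padicNorm_mul_le_of_le_one h2 _).trans_lt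
        (abv_pow (padicNorm p) x 2 ▸ pow_lt_pow_right₀ hx (by norm_num)))
      (padicNorm_add_lt ((padicNorm_mul_le_of_le_one h8 _).trans_lt (lt_self_pow₀ hx (by norm_num)))
        (ha2.trans_lt (one_lt_pow₀ hx (by norm_num))))
  rw [show x ^ 4 - 2 * a * x ^ 2 - 8 * b * x + a ^ 2 =
    x ^ 4 + (-2 * a * x ^ 2 + (-8 * b * x + a ^ 2)) by ring,
    padicNorm_add_eq_left_of_lt h_lower, hx4]

lemma exists_equation_padicNorm_two_eq_four_mul {a b x y : ℚ} (ha : padicNorm 2 a ≤ 1)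
    (hb : padicNorm 2 b ≤ 1) (h : (shortWeierstrass a b).Equation x y)
    (hx : 1 < padicNorm 2 x) :
    ∃ x' y', (shortWeierstrass a b).Equation x' y' ∧ padicNorm 2 x' = 4 * padicNorm 2 x := by
  have hcubic := padicNorm_cubic_of_one_lt ha hb hx
  have hcubic_ne : x ^ 3 + a * x + b ≠ 0 := fun h0 => by
    have := hcubic ▸ one_lt_pow₀ hx three_ne_zero
    norm_num [h0] at this
  have hy : 2 * y ≠ 0 := mul_ne_zero two_ne_zero fun hy => hcubic_ne <| by
    rw [← shortWeierstrass_equation_iff.1 h, hy]; ring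
  have h4 : padicNorm 2 4 = 4⁻¹ := by
    rw [show (4 : ℚ) = 2 * 2 by norm_num, padicNorm.mul, padicNorm_two_two]
    norm_num
  refine ⟨_, _, Affine.equation_add h h fun ⟨_, hneg⟩ => ?_, ?_⟩
  · simp only [shortWeierstrass, Affine.negY] at hneg
    exact hy (by linear_combination hneg)
  · rw [shortWeierstrass_addX_slope_self h hy, padicNorm.div, padicNorm.mul, h4, hcubic,
      padicNorm_duplication_numerator_of_one_lt ha hb hx]
    have : padicNorm 2 x ≠ 0 := by positivity
    field_simp

theorem shortWeierstrass_setOf_equation_infinite {a b x₀ y₀ : ℚ} (ha : padicNorm 2 a ≤ 1)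
    (hb : padicNorm 2 b ≤ 1) (h₀ : (shortWeierstrass a b).Equation x₀ y₀)
    (hx₀ : 1 < padicNorm 2 x₀) :
    {p : ℚ × ℚ | (shortWeierstrass a b).Equation p.1 p.2}.Infinite := by
  have orbit (n : ℕ) : ∃ x y, (shortWeierstrass a b).Equation x y ∧
      padicNorm 2 x = 4 ^ n * padicNorm 2 x₀ := by
    induction n with
    | zero => exact ⟨x₀, y₀, h₀, by simp⟩
    | succ n ih =>
      obtain ⟨x, y, h, hx⟩ := ih
      have hx_gt : 1 < padicNorm 2 x :=
        hx ▸ hx₀.trans_le (le_mul_of_one_le_left (by linarith) (one_le_pow₀ (by norm_num)))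
      obtain ⟨x', y', h', hx'⟩ := exists_equation_padicNorm_two_eq_four_mul ha hb h hx_gt
      exact ⟨x', y', h', by rw [hx', hx, pow_succ']; ring⟩
  refine Set.Infinite.of_image (fun p => padicNorm 2 p.1) (Set.infinite_of_not_bddAbove ?_)
  rintro ⟨B, hB⟩
  obtain ⟨n, hn⟩ := pow_unbounded_of_one_lt B (by norm_num : (1 : ℚ) < 4)
  obtain ⟨x, y, h, hx⟩ := orbit n
  have hxB : padicNorm 2 x ≤ B := hB ⟨(x, y), h, rfl⟩
  nlinarith [pow_pos (by norm_num : (0 : ℚ) < 4) n]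

/-- The point `(1,1)` lies on the curve `y² = x³ + x − 1`, and the rational points of this
curve are Zariski dense in it (equivalently, as the curve is irreducible of dimension one,
the set of rational points is infinite). -/
theorem rational_points_dense_248c1 :
    ((1 : ℚ) ^ 2 = 1 ^ 3 + 1 - 1) ∧
      {p : ℚ × ℚ | p.2 ^ 2 = p.1 ^ 3 + p.1 - 1}.Infinite := by
  refine ⟨by norm_num, ?_⟩
  have h_curve : {p : ℚ × ℚ | p.2 ^ 2 = p.1 ^ 3 + p.1 - 1} =
      {p : ℚ × ℚ | (shortWeierstrass 1 (-1)).Equation p.1 p.2} := by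
    ext p
    simp only [Set.mem_ofPred_eq, shortWeierstrass_equation_iff, one_mul, sub_eq_add_neg]
  have h_norm : padicNorm 2 (25 / 36 : ℚ) = 4 := by
    have h25 : padicNorm 2 (25 : ℕ) = 1 := (padicNorm.nat_eq_one_iff 25).2 (by norm_num)
    have h9 : padicNorm 2 (9 : ℕ) = 1 := (padicNorm.nat_eq_one_iff 9).2 (by norm_num)
    rw [show (25 / 36 : ℚ) = (25 : ℕ) / ((9 : ℕ) * 2 ^ 2) by norm_num, padicNorm.div,
      padicNorm.mul, abv_pow (padicNorm 2), h25, h9, padicNorm_two_two]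
    norm_num
  rw [h_curve]
  -- `(25/36, 37/216) = 4 • (1, 1)`; the points `(1, 1)` and `2 • (1, 1) = (2, -3)` have `|x|₂ ≤ 1`.
  exact shortWeierstrass_setOf_equation_infinite (x₀ := 25 / 36) (y₀ := 37 / 216) (by simp)
    (by simp) (shortWeierstrass_equation_iff.2 (by norm_num)) (by rw [h_norm]; norm_num)
end
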